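/- arXiv:math/0205177 — 5 statements merged into one kernel-verified Lean document; each statement's English description precedes it below -/
import Mathlib

section
/- If d is a diagonal operator on ℓ²(ℕ) with eigenvalues λ₁, λ₂, …, then the numerical range of d equals the set of all convergent sums ∑ₙ λₙ tₙ where 0 ≤ tₙ ≤ 1 for all n and ∑ₙ tₙ = 1. -/
open scoped InnerProductSpace

private lemma diagonal_inner_hasSum
    {H : Type*} [NormedAddCommGroup H] [InnerProductSpace ℂ H] [CompleteSpace H]
    (e : HilbertBasis ℕ ℂ H) (Λ : ℕ → ℂ) (d : H →L[ℂ] H)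
    (hd : ∀ n, d (e n) = Λ n • e n) (x : H) :
    HasSum (fun n => ((‖(e.repr x : _) n‖ ^ 2 : ℝ) : ℂ) * Λ n) ⟪x, d x⟫_ℂ := by
  have hedx : ∀ i : ℕ, ⟪(e i : H), d x⟫_ℂ = Λ i * (e.repr x : _) i := by
    intro i
    have hs := e.hasSum_repr x
    have hds : HasSum (fun j : ℕ => (e.repr x : _) j • (Λ j • (e j : H))) (d x) := by
      have := hs.mapL d
      simpa [hd] using this
    have hin := hds.mapL (innerSL ℂ (e i : H))
    have hti : (fun j : ℕ => (innerSL ℂ (e i : H)) ((e.repr x : _) j • (Λ j • (e j : H))))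
        = fun j : ℕ => if j = i then Λ i * (e.repr x : _) i else 0 := by
      funext j
      have horth := orthonormal_iff_ite.mp e.orthonormal i j
      by_cases h : j = i
      · subst h
        simp only [innerSL_apply_apply, inner_smul_right]
        rw [horth, if_pos rfl]
        simp only [if_true, eq_self_iff_true, if_pos trivial]
        ring
      · simp only [innerSL_apply_apply, inner_smul_right]
        rw [horth, if_neg (fun hh => h hh.symm), if_neg h]
        ring
    rw [hti] at hin
    have := (hasSum_ite_eq i (Λ i * (e.repr x : _) i)).unique hin
    simpa [innerSL_apply_apply] using this.symm
  have h1 := e.hasSum_inner_mul_inner x (d x)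
  have hterm : (fun i : ℕ => ⟪x, (e i : H)⟫_ℂ * ⟪(e i : H), d x⟫_ℂ)
      = fun i : ℕ => ((‖(e.repr x : _) i‖ ^ 2 : ℝ) : ℂ) * Λ i := by
    funext i
    rw [hedx i, ← inner_conj_symm, ← e.repr_apply_apply]
    have h2 : (starRingEnd ℂ) ((e.repr x : _) i) * (e.repr x : _) i
        = ((‖(e.repr x : _) i‖ ^ 2 : ℝ) : ℂ) := by
      rw [RCLike.conj_mul]; norm_cast
    linear_combination Λ i * h2
  rw [hterm] at h1
  exact h1

private lemma toReal_two_eq : ((2 : ENNReal)).toReal = ((2 : ℕ) : ℝ) := by norm_num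

/-- If `d` is a diagonal operator (with respect to a Hilbert basis `e` of a
separable Hilbert space) with eigenvalues `Λ n`, then the numerical range of
`d` equals the set of all convergent sums `∑' n, t n * Λ n` with `0 ≤ t n ≤ 1`
and `∑' n, t n = 1`. -/
theorem numericalRange_diagonal
    {H : Type*} [NormedAddCommGroup H] [InnerProductSpace ℂ H] [CompleteSpace H]
    (e : HilbertBasis ℕ ℂ H) (Λ : ℕ → ℂ) (d : H →L[ℂ] H)
    (hd : ∀ n, d (e n) = Λ n • e n) :
    {z : ℂ | ∃ x : H, ‖x‖ = 1 ∧ ⟪x, d x⟫_ℂ = z} =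
      {z : ℂ | ∃ t : ℕ → ℝ, (∀ n, 0 ≤ t n ∧ t n ≤ 1) ∧
        HasSum t 1 ∧ HasSum (fun n => (t n : ℂ) * Λ n) z} := by
  have htwo : (0 : ℝ) < (2 : ENNReal).toReal := by norm_num
  ext z
  simp only [Set.mem_setOf_eq]
  constructor
  · rintro ⟨x, hx, hz⟩
    have hnorm : HasSum (fun n => ‖(e.repr x : _) n‖ ^ 2) 1 := by
      have h := lp.hasSum_norm htwo (e.repr x)
      rw [toReal_two_eq] at h
      simp only [Real.rpow_natCast] at h
      rwa [LinearIsometryEquiv.norm_map, hx, one_pow] at h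
    refine ⟨fun n => ‖(e.repr x : _) n‖ ^ 2, ?_, hnorm, ?_⟩
    · intro n
      refine ⟨by positivity, ?_⟩
      exact le_hasSum hnorm n (fun j _ => by positivity)
    · rw [← hz]
      exact diagonal_inner_hasSum e Λ d hd x
  · rintro ⟨t, htb, ht1, htΛ⟩
    set g : ℕ → ℂ := fun n => ((Real.sqrt (t n) : ℝ) : ℂ) with hg
    have hgn : ∀ n, ‖g n‖ ^ 2 = t n := by
      intro n
      simp only [hg, Complex.norm_real, Real.norm_eq_abs, abs_of_nonneg (Real.sqrt_nonneg _),
        Real.sq_sqrt (htb n).1]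
    have hmem : Memℓp g 2 := by
      apply memℓp_gen
      have heq : (fun i => ‖g i‖ ^ (2 : ENNReal).toReal) = t := by
        funext i
        rw [toReal_two_eq, Real.rpow_natCast, hgn i]
      rw [heq]
      exact ht1.summable
    set x : H := e.repr.symm ⟨g, hmem⟩ with hxdef
    have hrepr : ((e.repr x : _) : ℕ → ℂ) = g := by
      simp [hxdef]
    have hsum : HasSum t (‖x‖ ^ 2) := by
      have h := lp.hasSum_norm htwo (e.repr x)
      rw [toReal_two_eq] at h
      simp only [Real.rpow_natCast] at h
      rw [LinearIsometryEquiv.norm_map, hrepr] at h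
      have heq : (fun i => ‖g i‖ ^ (2 : ℕ)) = t := by
        funext i; exact hgn i
      rwa [heq] at h
    have h2 : ‖x‖ ^ 2 = 1 := (ht1.unique hsum).symm
    have hxnorm : ‖x‖ = 1 := by
      have h3 : Real.sqrt (‖x‖ ^ 2) = Real.sqrt 1 := by rw [h2]
      rwa [Real.sqrt_sq (norm_nonneg x), Real.sqrt_one] at h3
    refine ⟨x, hxnorm, ?_⟩
    have hkey := diagonal_inner_hasSum e Λ d hd x
    rw [hrepr] at hkey
    have heq2 : (fun n => ((‖g n‖ ^ 2 : ℝ) : ℂ) * Λ n) = fun n => (t n : ℂ) * Λ n := by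
      funext n; rw [hgn n]
    rw [heq2] at hkey
    exact hkey.unique htΛ
end

section
/- If the numerical range of a bounded operator d is a line segment in ℂ, λ is an endpoint of W(d), and x is a unit vector with ⟨d x, x⟩ = λ, then d x = λ x. -/
open scoped InnerProductSpace

open scoped ComplexConjugate

/-- A bounded operator whose quadratic form is real and nonnegative annihilates
any vector on which the quadratic form vanishes. -/
lemma aux_pos_inner_zero {H : Type*} [NormedAddCommGroup H] [InnerProductSpace ℂ H]
    (f : H →L[ℂ] H) (hpos : ∀ y : H, ∃ r : ℝ, 0 ≤ r ∧ ⟪y, f y⟫_ℂ = (r : ℂ))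
    (x : H) (hx : ⟪x, f x⟫_ℂ = 0) : f x = 0 := by
  have hsymm : LinearMap.IsSymmetric (f : H →ₗ[ℂ] H) := by
    rw [LinearMap.isSymmetric_iff_inner_map_self_real]
    intro v
    obtain ⟨r, _, hr⟩ := hpos v
    simp only [ContinuousLinearMap.coe_coe]
    rw [← inner_conj_symm (f v) v, hr]
    simp
  have main : ∀ z : H, (⟪z, f x⟫_ℂ).re = 0 := by
    intro z
    obtain ⟨r, hr0, hr⟩ := hpos z
    have ht : ∀ t : ℝ, 0 ≤ 2 * (⟪z, f x⟫_ℂ).re * t + r * t ^ 2 := by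
      intro t
      obtain ⟨s, hs0, hs⟩ := hpos (x + (t : ℂ) • z)
      have hsymm' : ⟪x, f z⟫_ℂ = conj ⟪z, f x⟫_ℂ := by
        have := hsymm x z
        simp only [ContinuousLinearMap.coe_coe] at this
        rw [← this, ← inner_conj_symm z, Complex.conj_conj]
      have expand : ⟪x + (t : ℂ) • z, f (x + (t : ℂ) • z)⟫_ℂ
          = ((2 * (⟪z, f x⟫_ℂ).re * t + r * t ^ 2 : ℝ) : ℂ) := by
        have hct : conj ((t : ℂ)) = (t : ℂ) := Complex.conj_ofReal t
        have h2re : ⟪z, f x⟫_ℂ + conj ⟪z, f x⟫_ℂ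
            = 2 * (((⟪z, f x⟫_ℂ).re : ℝ) : ℂ) := by
          rw [Complex.add_conj]
          push_cast
          try ring
        rw [map_add, map_smul, inner_add_left, inner_add_right, inner_add_right,
          inner_smul_left, inner_smul_right, inner_smul_left, inner_smul_right,
          hx, hr, hsymm', hct]
        push_cast
        linear_combination (t : ℂ) * h2re
      have heq : ((2 * (⟪z, f x⟫_ℂ).re * t + r * t ^ 2 : ℝ) : ℂ) = ((s : ℝ) : ℂ) := by
        rw [← expand, hs]
      have := Complex.ofReal_injective heq
      linarith
    set a : ℝ := 2 * (⟪z, f x⟫_ℂ).re with ha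
    have hr1 : (0 : ℝ) < r + 1 := by linarith
    have h1 := ht (-a / (r + 1))
    have ha0 : a = 0 := by
      have h2 : a * (-a / (r + 1)) + r * (-a / (r + 1)) ^ 2 = -a ^ 2 / (r + 1) ^ 2 := by
        field_simp
        ring
      rw [h2] at h1
      have hp : (0 : ℝ) < (r + 1) ^ 2 := by positivity
      have h3 := mul_le_mul_of_nonneg_right h1 (le_of_lt hp)
      rw [zero_mul, div_mul_cancel₀ _ (ne_of_gt hp)] at h3
      have h4 : a ^ 2 = 0 := le_antisymm (by linarith) (sq_nonneg a)
      exact pow_eq_zero_iff two_ne_zero |>.mp h4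
    linarith [ha ▸ ha0]
  have key : ∀ z : H, ⟪z, f x⟫_ℂ = 0 := by
    intro z
    have h1 := main z
    have h2 := main (Complex.I • z)
    rw [inner_smul_left] at h2
    have him : (⟪z, f x⟫_ℂ).im = 0 := by
      have : (conj Complex.I * ⟪z, f x⟫_ℂ).re = (⟪z, f x⟫_ℂ).im := by
        simp [Complex.conj_I, Complex.mul_re]
      rw [this] at h2
      exact h2
    exact Complex.ext h1 him
  have := key (f x)
  rwa [inner_self_eq_zero] at this

/-- If the numerical range of a bounded operator `d` is contained in a line
segment in `ℂ` with endpoint `λ`, and `x` is a unit vector with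
`⟨d x, x⟩ = λ`, then `d x = λ • x`. -/
theorem eigenvector_of_numericalRange_segment_endpoint
    {H : Type*} [NormedAddCommGroup H] [InnerProductSpace ℂ H]
    (d : H →L[ℂ] H) (lam mu : ℂ)
    (hseg : {z : ℂ | ∃ y : H, ‖y‖ = 1 ∧ ⟪y, d y⟫_ℂ = z} ⊆ segment ℝ lam mu)
    (x : H) (hx : ‖x‖ = 1) (hdx : ⟪x, d x⟫_ℂ = lam) :
    d x = lam • x := by
  set e : H →L[ℂ] H := d - lam • (1 : H →L[ℂ] H) with he
  have heapp : ∀ y : H, e y = d y - lam • y := by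
    intro y; simp [he]
  have he_inner : ∀ y : H, ⟪y, e y⟫_ℂ = ⟪y, d y⟫_ℂ - lam * ⟪y, y⟫_ℂ := by
    intro y
    rw [heapp, inner_sub_right, inner_smul_right]
  have hex0 : ⟪x, e x⟫_ℂ = 0 := by
    rw [he_inner, hdx, inner_self_eq_norm_sq_to_K, hx]
    push_cast
    ring
  -- quadratic form of e on unit vectors
  have hunit : ∀ y : H, ‖y‖ = 1 → ∃ b : ℝ, 0 ≤ b ∧ ⟪y, e y⟫_ℂ = (b : ℂ) * (mu - lam) := by
    intro y hy
    obtain ⟨a, b, ha, hb, hab, habv⟩ := hseg ⟨y, hy, rfl⟩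
    refine ⟨b, hb, ?_⟩
    have h1 : ⟪y, d y⟫_ℂ = (a : ℂ) * lam + (b : ℂ) * mu := by
      rw [← habv, Complex.real_smul, Complex.real_smul]
    have hab' : (a : ℂ) + (b : ℂ) = 1 := by exact_mod_cast hab
    rw [he_inner, h1, inner_self_eq_norm_sq_to_K, hy]
    push_cast
    linear_combination lam * hab'
  -- general vectors, by scaling
  have hgen : ∀ y : H, ∃ b : ℝ, 0 ≤ b ∧ ⟪y, e y⟫_ℂ = (b : ℂ) * (mu - lam) := by
    intro y
    rcases eq_or_ne y 0 with rfl | hy0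
    · exact ⟨0, le_refl 0, by simp⟩
    · have hny : (0 : ℝ) < ‖y‖ := norm_pos_iff.mpr hy0
      have hnyC : ((‖y‖ : ℂ)) ≠ 0 := by
        exact_mod_cast ne_of_gt hny
      set u : H := ((‖y‖ : ℂ))⁻¹ • y with hu
      have hnu : ‖u‖ = 1 := by
        rw [hu, norm_smul, norm_inv]
        simp only [Complex.norm_real, Real.norm_eq_abs, abs_norm]
        exact inv_mul_cancel₀ (ne_of_gt hny)
      obtain ⟨b, hb, hbv⟩ := hunit u hnu
      refine ⟨‖y‖ ^ 2 * b, by positivity, ?_⟩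
      have hyu : y = (‖y‖ : ℂ) • u := by
        rw [hu, smul_smul, mul_inv_cancel₀ hnyC, one_smul]
      calc ⟪y, e y⟫_ℂ = ⟪(‖y‖ : ℂ) • u, e ((‖y‖ : ℂ) • u)⟫_ℂ := by rw [← hyu]
        _ = conj ((‖y‖ : ℂ)) * ((‖y‖ : ℂ) * ⟪u, e u⟫_ℂ) := by
            rw [map_smul, inner_smul_left, inner_smul_right]
        _ = ((‖y‖ ^ 2 * b : ℝ) : ℂ) * (mu - lam) := by
            rw [Complex.conj_ofReal, hbv]
            push_cast
            ring
  by_cases hc : mu - lam = 0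
  · have hposz : ∀ y : H, ∃ r : ℝ, 0 ≤ r ∧ ⟪y, e y⟫_ℂ = (r : ℂ) := by
      intro y
      obtain ⟨b, hb, hbv⟩ := hgen y
      exact ⟨0, le_refl 0, by rw [hbv, hc, mul_zero]; norm_num⟩
    have := aux_pos_inner_zero e hposz x hex0
    rw [heapp] at this
    have := sub_eq_zero.mp this
    exact this
  · set f : H →L[ℂ] H := (mu - lam)⁻¹ • e with hf
    have hfapp : ∀ y : H, f y = (mu - lam)⁻¹ • e y := fun y => rfl
    have hposf : ∀ y : H, ∃ r : ℝ, 0 ≤ r ∧ ⟪y, f y⟫_ℂ = (r : ℂ) := by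
      intro y
      obtain ⟨b, hb, hbv⟩ := hgen y
      refine ⟨b, hb, ?_⟩
      rw [hfapp, inner_smul_right, hbv]
      field_simp
    have hfx0 : ⟪x, f x⟫_ℂ = 0 := by
      rw [hfapp, inner_smul_right, hex0, mul_zero]
    have hfx := aux_pos_inner_zero f hposf x hfx0
    rw [hfapp] at hfx
    have hex : e x = 0 := by
      rcases smul_eq_zero.mp hfx with h | h
      · exact absurd h (inv_ne_zero hc)
      · exact h
    rw [heapp] at hex
    exact sub_eq_zero.mp hex
end

section
/- Let d be a bounded operator with d₁ = (d+d*)/2 ≥ 0 and let r ≠ 0 be the projection onto ker(d₁). Then the intersection F_W of the numerical range W(d) with the imaginary axis equals {0} if and only if r d₂ r = 0, where d₂ = (d-d*)/(2i). -/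
open scoped InnerProductSpace ComplexStarModule

/-!
Write `d = d₁ + i d₂` with `d₁ = ℜ d` and `d₂ = ℑ d` self-adjoint, so that
`re ⟪x, d x⟫ = ⟪x, d₁ x⟫`. Since `d₁ ≥ 0`, this vanishes exactly when `d₁ x = 0`, and then
`⟪x, d x⟫ = i ⟪x, d₂ x⟫`. Hence `W(d) ∩ iℝ` is the image of the unit sphere of `ker d₁` under
`x ↦ i ⟪x, d₂ x⟫`, which is nonempty because `ker d₁ ≠ 0`; it is `{0}` iff the quadratic form
of `d₂` vanishes on `ker d₁`, iff (by homogeneity and polarization) `r d₂ r = 0`.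
-/

section StarModule

variable {A : Type*} [AddCommGroup A] [Module ℂ A] [StarAddMonoid A] [StarModule ℂ A]

theorem coe_realPart_eq_inv_two_smul (a : A) : (ℜ a : A) = (2 : ℂ)⁻¹ • (a + star a) := by
  rw [realPart_apply_coe, ← Complex.coe_smul]
  norm_num

theorem coe_imaginaryPart_eq_inv_two_I_smul (a : A) :
    (ℑ a : A) = (2 * Complex.I)⁻¹ • (a - star a) := by
  rw [imaginaryPart_apply_coe, ← Complex.coe_smul, smul_smul]
  congr 1
  field_simp
  norm_num

end StarModule

namespace ContinuousLinearMap

variable {H : Type*} [NormedAddCommGroup H] [InnerProductSpace ℂ H] [CompleteSpace H]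

/-- A positive operator is `S† S`, and `re ⟪x, S† S x⟫ = ‖S x‖²`. -/
theorem IsPositive.apply_eq_zero_of_re_inner_eq_zero {T : H →L[ℂ] H} (hT : T.IsPositive)
    {x : H} (hx : (⟪x, T x⟫_ℂ).re = 0) : T x = 0 := by
  obtain ⟨S, rfl⟩ := CStarAlgebra.nonneg_iff_eq_star_mul_self.mp ((nonneg_iff_isPositive T).mpr hT)
  have hSx : ‖S x‖ ^ 2 = 0 := by
    rw [apply_norm_sq_eq_inner_adjoint_right, ← star_eq_adjoint]
    exact hx
  simp [norm_eq_zero.mp (pow_eq_zero_iff two_ne_zero |>.mp hSx)]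

theorem inner_apply_eq_inner_realPart_add_I_mul (T : H →L[ℂ] H) (x y : H) :
    ⟪x, T y⟫_ℂ = ⟪x, (ℜ T : H →L[ℂ] H) y⟫_ℂ + Complex.I * ⟪x, (ℑ T : H →L[ℂ] H) y⟫_ℂ := by
  conv_lhs => rw [← realPart_add_I_smul_imaginaryPart T]
  simp

theorem re_inner_apply_self_eq_re_inner_realPart (T : H →L[ℂ] H) (x : H) :
    (⟪x, T x⟫_ℂ).re = (⟪x, (ℜ T : H →L[ℂ] H) x⟫_ℂ).re := by
  rw [inner_apply_eq_inner_realPart_add_I_mul]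
  simpa using (ℑ T).2.isSymmetric.im_inner_self_apply x

theorem re_inner_apply_self_eq_zero_iff {T : H →L[ℂ] H} (hT : (ℜ T : H →L[ℂ] H).IsPositive)
    (x : H) : (⟪x, T x⟫_ℂ).re = 0 ↔ (ℜ T : H →L[ℂ] H) x = 0 := by
  rw [re_inner_apply_self_eq_re_inner_realPart]
  exact ⟨hT.apply_eq_zero_of_re_inner_eq_zero, fun h => by simp [h]⟩

theorem mem_numericalRange_imaginaryAxis_iff {T : H →L[ℂ] H}
    (hT : (ℜ T : H →L[ℂ] H).IsPositive) {z : ℂ} :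
    ((∃ x : H, ‖x‖ = 1 ∧ ⟪x, T x⟫_ℂ = z) ∧ z.re = 0) ↔
      ∃ x ∈ LinearMap.ker ((ℜ T : H →L[ℂ] H) : H →ₗ[ℂ] H), ‖x‖ = 1 ∧
        Complex.I * ⟪x, (ℑ T : H →L[ℂ] H) x⟫_ℂ = z := by
  constructor
  · rintro ⟨⟨x, hx1, rfl⟩, hre⟩
    have hx : (ℜ T : H →L[ℂ] H) x = 0 := (re_inner_apply_self_eq_zero_iff hT x).mp hre
    exact ⟨x, hx, hx1, by simp [inner_apply_eq_inner_realPart_add_I_mul T x x, hx]⟩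
  · rintro ⟨x, hx, hx1, rfl⟩
    have hx : (ℜ T : H →L[ℂ] H) x = 0 := hx
    have hTx : ⟪x, T x⟫_ℂ = Complex.I * ⟪x, (ℑ T : H →L[ℂ] H) x⟫_ℂ := by
      simp [inner_apply_eq_inner_realPart_add_I_mul T x x, hx]
    exact ⟨⟨x, hx1, hTx⟩, by rw [← hTx, re_inner_apply_self_eq_zero_iff hT]; exact hx⟩

end ContinuousLinearMap

namespace Submodule

variable {V : Type*} [NormedAddCommGroup V] [InnerProductSpace ℂ V] (K : Submodule ℂ V)
  (T : V →ₗ[ℂ] V)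

theorem inner_apply_self_eq_zero_of_norm_eq_one
    (hT : ∀ u ∈ K, ‖u‖ = 1 → ⟪u, T u⟫_ℂ = 0) {x : V} (hx : x ∈ K) : ⟪x, T x⟫_ℂ = 0 := by
  obtain rfl | hx0 := eq_or_ne x 0
  · simp
  have hnorm : (‖x‖ : ℂ) ≠ 0 := by exact_mod_cast norm_ne_zero_iff.mpr hx0
  have hu := hT _ (K.smul_mem (‖x‖ : ℂ)⁻¹ hx) (norm_smul_inv_norm hx0)
  simpa [inner_smul_left, inner_smul_right, hnorm] using hu

theorem inner_apply_eq_zero_of_inner_apply_self_eq_zero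
    (hT : ∀ z ∈ K, ⟪z, T z⟫_ℂ = 0) {x y : V} (hx : x ∈ K) (hy : y ∈ K) : ⟪x, T y⟫_ℂ = 0 := by
  have hT' : ∀ z ∈ K, ⟪T z, z⟫_ℂ = 0 := fun z hz => inner_eq_zero_symm.mp (hT z hz)
  rw [inner_eq_zero_symm, inner_map_polarization, hT' _ (K.add_mem hx hy), hT' _ (K.sub_mem hx hy),
    hT' _ (K.add_mem hx (K.smul_mem _ hy)), hT' _ (K.sub_mem hx (K.smul_mem _ hy))]
  simp

end Submodule

open ContinuousLinearMap in
/-- Let `d` be bounded with real part `d₁ = (d+d*)/2` positive semidefinite and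
imaginary part `d₂ = (d-d*)/(2i)`, and suppose the kernel of `d₁` is nonzero
(so that the projection `r` onto `ker d₁` is nonzero).  Then
`F_W = W(d) ∩ iℝ` equals `{0}` if and only if `r d₂ r = 0`, i.e. if and only if
`⟪x, d₂ y⟫ = 0` for all `x, y ∈ ker d₁`. -/
theorem numericalRange_imaginaryAxis_eq_zero_iff
    {H : Type*} [NormedAddCommGroup H] [InnerProductSpace ℂ H] [CompleteSpace H]
    (d : H →L[ℂ] H)
    (d₁ : H →L[ℂ] H) (hd₁ : d₁ = (2 : ℂ)⁻¹ • (d + ContinuousLinearMap.adjoint d))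
    (d₂ : H →L[ℂ] H)
    (hd₂ : d₂ = (2 * Complex.I)⁻¹ • (d - ContinuousLinearMap.adjoint d))
    (hpos : d₁.IsPositive) (hker : LinearMap.ker (d₁ : H →ₗ[ℂ] H) ≠ ⊥) :
    {z : ℂ | (∃ x : H, ‖x‖ = 1 ∧ ⟪x, d x⟫_ℂ = z) ∧ z.re = 0} = {0} ↔
      ∀ x y : H, x ∈ LinearMap.ker (d₁ : H →ₗ[ℂ] H) → y ∈ LinearMap.ker (d₁ : H →ₗ[ℂ] H) →
        ⟪x, d₂ y⟫_ℂ = 0 := by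
  rw [← star_eq_adjoint, ← coe_realPart_eq_inv_two_smul] at hd₁
  rw [← star_eq_adjoint, ← coe_imaginaryPart_eq_inv_two_I_smul] at hd₂
  subst hd₁ hd₂
  set K := LinearMap.ker ((ℜ d : H →L[ℂ] H) : H →ₗ[ℂ] H)
  simp_rw [Set.ext_iff, Set.mem_ofPred_eq, mem_numericalRange_imaginaryAxis_iff hpos,
    Set.mem_singleton_iff]
  constructor
  · intro h x y hx hy
    refine K.inner_apply_eq_zero_of_inner_apply_self_eq_zero _ (fun z hz => ?_) hx hy
    refine K.inner_apply_self_eq_zero_of_norm_eq_one _ (fun u hu hu1 => ?_) hz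
    simpa using (h _).mp ⟨u, hu, hu1, rfl⟩
  · intro h z
    constructor
    · rintro ⟨x, hx, -, rfl⟩
      simp [h x x hx hx]
    · rintro rfl
      obtain ⟨x, hx, hx0⟩ := K.ne_bot_iff.mp hker
      have hu : (‖x‖ : ℂ)⁻¹ • x ∈ K := K.smul_mem _ hx
      exact ⟨_, hu, norm_smul_inv_norm hx0, by simp [h x x hx hx]⟩
end

section
/- If λ ∈ W(c) is an extreme point of the numerical range of a bounded operator c, then M_λ = {x ∈ H : ⟨c x, x⟩ = λ‖x‖²} is a linear subspace of H. -/
/-!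
Write `q x = ⟪x, c x⟫`. The quadratic form `q` satisfies `q (a • x) = |a|² q x` and the
parallelogram identity `q (x + y) + q (x - y) = 2 (q x + q y)`, exactly like `‖x‖²`. So if `x`
and `y` lie in `M_λ`, then `q (x + y) + q (x - y) = λ (‖x + y‖² + ‖x - y‖²)`, which exhibits `λ`
as a convex combination of the points `q u / ‖u‖²` and `q v / ‖v‖²` of `W(c)`, with `u = x + y`,
`v = x - y` and weights proportional to `‖u‖²` and `‖v‖²`. As `λ` is extreme, `q u / ‖u‖² = λ`,
i.e. `x + y ∈ M_λ`.
-/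

open scoped InnerProductSpace

theorem mem_openSegment_of_add_eq_smul {E : Type*} [AddCommGroup E] [Module ℝ E]
    {a b : ℝ} (ha : 0 < a) (hb : 0 < b) {p q z : E} (h : p + q = (a + b) • z) :
    z ∈ openSegment ℝ (a⁻¹ • p) (b⁻¹ • q) := by
  have hab : a + b ≠ 0 := by positivity
  refine ⟨a / (a + b), b / (a + b), by positivity, by positivity, by field_simp, ?_⟩
  calc (a / (a + b)) • a⁻¹ • p + (b / (a + b)) • b⁻¹ • q = (a + b)⁻¹ • (p + q) := by
        simp only [smul_smul, smul_add]
        congr 2 <;> field_simp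
    _ = z := by rw [h, smul_smul, inv_mul_cancel₀ hab, one_smul]

section NumericalRange

variable {H : Type*} [NormedAddCommGroup H] [InnerProductSpace ℂ H]

def numericalRange (T : H →ₗ[ℂ] H) : Set ℂ := {z | ∃ x : H, ‖x‖ = 1 ∧ ⟪x, T x⟫_ℂ = z}

variable (T : H →ₗ[ℂ] H)

theorem inv_norm_sq_smul_inner_map_self_mem_numericalRange {x : H} (hx : x ≠ 0) :
    (‖x‖ ^ 2)⁻¹ • ⟪x, T x⟫_ℂ ∈ numericalRange T := by
  have hx' : (‖x‖ : ℂ) ≠ 0 := by exact_mod_cast norm_ne_zero_iff.mpr hx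
  refine ⟨(‖x‖ : ℂ)⁻¹ • x, ?_, ?_⟩
  · rw [norm_smul, norm_inv, Complex.norm_real, norm_norm, inv_mul_cancel₀ (by simpa using hx)]
  · rw [map_smul, inner_smul_left, inner_smul_right, map_inv₀, Complex.conj_ofReal,
      Complex.real_smul]
    push_cast
    field_simp

theorem inner_map_self_smul (a : ℂ) (x : H) :
    ⟪a • x, T (a • x)⟫_ℂ = (‖a‖ : ℂ) ^ 2 * ⟪x, T x⟫_ℂ := by
  rw [map_smul, inner_smul_left, inner_smul_right, ← mul_assoc, Complex.conj_mul']

theorem inner_map_self_add_add_inner_map_self_sub (x y : H) :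
    ⟪x + y, T (x + y)⟫_ℂ + ⟪x - y, T (x - y)⟫_ℂ = 2 * (⟪x, T x⟫_ℂ + ⟪y, T y⟫_ℂ) := by
  simp only [map_add, map_sub, inner_add_left, inner_add_right, inner_sub_left, inner_sub_right]
  ring

variable {T} {lam : ℂ}

theorem inner_map_self_eq_of_mem_extremePoints
    (hlam : lam ∈ Set.extremePoints ℝ (numericalRange T)) {u v : H}
    (h : ⟪u, T u⟫_ℂ + ⟪v, T v⟫_ℂ = lam * ((‖u‖ : ℂ) ^ 2 + (‖v‖ : ℂ) ^ 2)) :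
    ⟪u, T u⟫_ℂ = lam * (‖u‖ : ℂ) ^ 2 := by
  rcases eq_or_ne u 0 with rfl | hu
  · simp
  rcases eq_or_ne v 0 with rfl | hv
  · simpa using h
  have hseg : lam ∈ openSegment ℝ ((‖u‖ ^ 2)⁻¹ • ⟪u, T u⟫_ℂ) ((‖v‖ ^ 2)⁻¹ • ⟪v, T v⟫_ℂ) := by
    refine mem_openSegment_of_add_eq_smul (by positivity) (by positivity) ?_
    rw [h, Complex.real_smul]
    push_cast
    ring
  have hlam_eq := hlam.2 (inv_norm_sq_smul_inner_map_self_mem_numericalRange T hu)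
    (inv_norm_sq_smul_inner_map_self_mem_numericalRange T hv) hseg
  have hu' : (‖u‖ : ℂ) ≠ 0 := by exact_mod_cast norm_ne_zero_iff.mpr hu
  rw [← hlam_eq, Complex.real_smul]
  push_cast
  field_simp

theorem inner_map_self_add_eq_of_mem_extremePoints
    (hlam : lam ∈ Set.extremePoints ℝ (numericalRange T)) {x y : H}
    (hx : ⟪x, T x⟫_ℂ = lam * (‖x‖ : ℂ) ^ 2) (hy : ⟪y, T y⟫_ℂ = lam * (‖y‖ : ℂ) ^ 2) :
    ⟪x + y, T (x + y)⟫_ℂ = lam * (‖x + y‖ : ℂ) ^ 2 := by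
  refine inner_map_self_eq_of_mem_extremePoints hlam (v := x - y) ?_
  have hnorm : (‖x + y‖ : ℂ) ^ 2 + (‖x - y‖ : ℂ) ^ 2 = 2 * ((‖x‖ : ℂ) ^ 2 + (‖y‖ : ℂ) ^ 2) := by
    exact_mod_cast parallelogram_law_with_norm ℂ x y
  rw [inner_map_self_add_add_inner_map_self_sub, hx, hy, hnorm]
  ring

end NumericalRange

/-- If `λ` is an extreme point of the numerical range of a bounded operator
`c`, then `M_λ = {x : ⟨c x, x⟩ = λ ‖x‖²}` is a linear subspace of `H`. -/
theorem Mlambda_submodule_of_extremePoint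
    {H : Type*} [NormedAddCommGroup H] [InnerProductSpace ℂ H]
    (c : H →L[ℂ] H) (lam : ℂ)
    (hlam : lam ∈ Set.extremePoints ℝ {z : ℂ | ∃ x : H, ‖x‖ = 1 ∧ ⟪x, c x⟫_ℂ = z}) :
    ∃ S : Submodule ℂ H,
      {x : H | ⟪x, c x⟫_ℂ = lam * (‖x‖ : ℂ) ^ 2} = (S : Set H) := by
  let T : H →ₗ[ℂ] H := c
  refine ⟨{ carrier := {x : H | ⟪x, T x⟫_ℂ = lam * (‖x‖ : ℂ) ^ 2}
            zero_mem' := by simp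
            add_mem' := inner_map_self_add_eq_of_mem_extremePoints hlam
            smul_mem' := fun a x hx => ?_ }, rfl⟩
  change ⟪a • x, T (a • x)⟫_ℂ = lam * (‖a • x‖ : ℂ) ^ 2
  rw [inner_map_self_smul, hx, norm_smul]
  push_cast
  ring
end

section
/- With B the spectral scale of c and I_t = {z ∈ ℂ : (t, z) ∈ B} the isotrace slice at t ∈ (0,1), if 0 < s < t < 1 then (s/t)·I_t ⊆ I_s; consequently the sets Δ_t = {z/t : z ∈ I_t} are increasing as t decreases, and their union Δ(B \ {0}) = {z/x : (x,z) ∈ B, x ≠ 0} is convex. -/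
/-!
Since `B` is convex and contains the origin, `(s/t) • (t, z) = (s, (s/t) • z)` lies in `B`
whenever `(t, z)` does and `0 < s ≤ t`. Rescaling, the normalized slices
`Δ_t = {w | (t, t • w) ∈ B}` grow as `t` decreases. Each `Δ_t` is an affine preimage of `B`,
hence convex, and a directed union of convex sets is convex; because the first coordinates
are nonnegative, this union is exactly the set of ratios `z / x`.
-/

open Set

section NormalizedSlice

variable {E : Type*} [AddCommGroup E] [Module ℝ E] {B : Set (ℝ × E)}

def normalizedSlice (B : Set (ℝ × E)) (t : ℝ) : Set E := {w | (t, t • w) ∈ B}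

@[simp]
theorem mem_normalizedSlice {t : ℝ} {w : E} : w ∈ normalizedSlice B t ↔ (t, t • w) ∈ B :=
  Iff.rfl

theorem Convex.mk_div_smul_mem_of_le (hB : Convex ℝ B) (h0 : (0 : ℝ × E) ∈ B) {s t : ℝ}
    (hs : 0 < s) (hst : s ≤ t) {z : E} (hz : (t, z) ∈ B) : (s, (s / t) • z) ∈ B := by
  have ht : 0 < t := hs.trans_le hst
  have hmem := hB.smul_mem_of_zero_mem h0 hz ⟨div_nonneg hs.le ht.le, (div_le_one ht).2 hst⟩
  rwa [Prod.smul_mk, smul_eq_mul, div_mul_cancel₀ s ht.ne'] at hmem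

theorem Convex.normalizedSlice_subset_of_le (hB : Convex ℝ B) (h0 : (0 : ℝ × E) ∈ B)
    {s t : ℝ} (hs : 0 < s) (hst : s ≤ t) : normalizedSlice B t ⊆ normalizedSlice B s := by
  intro w hw
  have hmem := hB.mk_div_smul_mem_of_le h0 hs hst hw
  rwa [smul_smul, div_mul_cancel₀ s (hs.trans_le hst).ne'] at hmem

theorem convex_normalizedSlice (hB : Convex ℝ B) (t : ℝ) : Convex ℝ (normalizedSlice B t) := by
  intro w₁ hw₁ w₂ hw₂ a b ha hb hab
  have hmem := hB hw₁ hw₂ ha hb hab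
  rwa [Prod.smul_mk, Prod.smul_mk, Prod.mk_add_mk, ← add_smul, hab, one_smul, smul_comm a,
    smul_comm b, ← smul_add] at hmem

theorem convex_iUnion_normalizedSlice (hB : Convex ℝ B) (h0 : (0 : ℝ × E) ∈ B) :
    Convex ℝ (⋃ t : Ioi (0 : ℝ), normalizedSlice B t) := by
  refine Directed.convex_iUnion (fun s t => ⟨⟨min s t, mem_Ioi.2 (lt_min s.2 t.2)⟩, ?_, ?_⟩)
    fun t => convex_normalizedSlice hB t
  · exact hB.normalizedSlice_subset_of_le h0 (lt_min s.2 t.2) (min_le_left _ _)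
  · exact hB.normalizedSlice_subset_of_le h0 (lt_min s.2 t.2) (min_le_right _ _)

end NormalizedSlice

theorem Complex.div_ofReal_eq_inv_smul (z : ℂ) (x : ℝ) : z / (x : ℂ) = x⁻¹ • z := by
  rw [Complex.real_smul, Complex.ofReal_inv, div_eq_inv_mul]

theorem mem_normalizedSlice_iff_exists_div {B : Set (ℝ × ℂ)} {x : ℝ} (hx : x ≠ 0) {w : ℂ} :
    w ∈ normalizedSlice B x ↔ ∃ z : ℂ, (x, z) ∈ B ∧ w = z / (x : ℂ) := by
  simp only [mem_normalizedSlice, Complex.div_ofReal_eq_inv_smul]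
  constructor
  · exact fun hw => ⟨x • w, hw, by rw [inv_smul_smul₀ hx]⟩
  · rintro ⟨z, hz, rfl⟩
    rwa [smul_inv_smul₀ hx]

theorem isotrace_slices_nested_and_range_convex_general
    (B : Set (ℝ × ℂ)) (hconv : Convex ℝ B)
    (h0 : ((0 : ℝ), (0 : ℂ)) ∈ B)
    (hcoord : ∀ p ∈ B, 0 ≤ p.1 ∧ p.1 ≤ 1)
    (s t : ℝ) (hs : 0 < s) (hst : s < t) :
    ((fun z : ℂ => ((s / t : ℝ) : ℂ) * z) '' {z : ℂ | (t, z) ∈ B}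
        ⊆ {z : ℂ | (s, z) ∈ B}) ∧
    ({w : ℂ | ∃ z : ℂ, (t, z) ∈ B ∧ w = z / (t : ℂ)} ⊆
        {w : ℂ | ∃ z : ℂ, (s, z) ∈ B ∧ w = z / (s : ℂ)}) ∧
    Convex ℝ {w : ℂ | ∃ x : ℝ, ∃ z : ℂ, (x, z) ∈ B ∧ x ≠ 0 ∧ w = z / (x : ℂ)} := by
  have hslice {x : ℝ} (hx : x ≠ 0) {w : ℂ} :=
    mem_normalizedSlice_iff_exists_div (B := B) hx (w := w)
  refine ⟨?_, fun w hw => ?_, ?_⟩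
  · rintro _ ⟨z, hz, rfl⟩
    show (s, ((s / t : ℝ) : ℂ) * z) ∈ B
    simpa only [Complex.real_smul] using hconv.mk_div_smul_mem_of_le h0 hs hst.le hz
  · exact (hslice hs.ne').1 <|
      hconv.normalizedSlice_subset_of_le h0 hs hst.le ((hslice (hs.trans hst).ne').2 hw)
  · refine (congrArg (Convex ℝ) ?_).mpr (convex_iUnion_normalizedSlice hconv h0)
    ext w
    simp only [mem_iUnion, Subtype.exists, mem_Ioi, exists_prop]
    constructor
    · rintro ⟨x, z, hz, hx, rfl⟩
      exact ⟨x, (hcoord _ hz).1.lt_of_ne' hx, (hslice hx).2 ⟨z, hz, rfl⟩⟩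
    · rintro ⟨x, hx, hw⟩
      obtain ⟨z, hz, rfl⟩ := (hslice hx.ne').1 hw
      exact ⟨x, z, hz, hx.ne', rfl⟩

/-- Let `B ⊆ ℝ × ℂ` be the spectral scale: a compact convex set containing the
origin whose first coordinates lie in `[0,1]`, with isotrace slices
`I t = {z : (t, z) ∈ B}`.  If `0 < s < t < 1` then `(s/t) • I t ⊆ I s`, hence
`Δ_t = I_t / t ⊆ Δ_s = I_s / s`, and the union
`Δ(B \ {0}) = {z / x : (x, z) ∈ B, x ≠ 0}` is convex. -/
theorem isotrace_slices_nested_and_range_convex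
    (B : Set (ℝ × ℂ)) (hconv : Convex ℝ B) (hcpt : IsCompact B)
    (h0 : ((0 : ℝ), (0 : ℂ)) ∈ B)
    (hcoord : ∀ p ∈ B, 0 ≤ p.1 ∧ p.1 ≤ 1)
    (s t : ℝ) (hs : 0 < s) (hst : s < t) (ht : t < 1) :
    ((fun z : ℂ => ((s / t : ℝ) : ℂ) * z) '' {z : ℂ | (t, z) ∈ B}
        ⊆ {z : ℂ | (s, z) ∈ B}) ∧
    ({w : ℂ | ∃ z : ℂ, (t, z) ∈ B ∧ w = z / (t : ℂ)} ⊆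
        {w : ℂ | ∃ z : ℂ, (s, z) ∈ B ∧ w = z / (s : ℂ)}) ∧
    Convex ℝ {w : ℂ | ∃ x : ℝ, ∃ z : ℂ, (x, z) ∈ B ∧ x ≠ 0 ∧ w = z / (x : ℂ)} :=
  isotrace_slices_nested_and_range_convex_general B hconv h0 hcoord s t hs hst
end
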